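/- The 104 similarities satisfy the non-overlapping/open set condition with the open unit square: the open images F_1(□°), …, F_104(□°) are pairwise disjoint and each is contained in the open unit square □° = (0,1)×(0,1); equivalently, for i ≠ j the intersection F_i(□) ∩ F_j(□) is either a line segment, a single point, or empty. -/

import Mathlib

noncomputable section

/-- The plane ℝ² with the Euclidean metric. -/
abbrev Plane : Type := EuclideanSpace ℝ (Fin 2)

/-- The point (s, t) ∈ ℝ². -/
def pt (s t : ℝ) : Plane := WithLp.toLp 2 ![s, t]

/-- The unit square □ = [0,1] × [0,1]. -/
def unitSq : Set Plane := {z : Plane | z 0 ∈ Set.Icc (0:ℝ) 1 ∧ z 1 ∈ Set.Icc (0:ℝ) 1}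

/-- Vertical reflection Γ_v(x₁,x₂) = (x₁, 1-x₂). -/
def Γv : Plane → Plane := fun x => pt (x 0) (1 - x 1)

/-- Horizontal reflection Γ_h(x₁,x₂) = (1-x₁, x₂). -/
def Γh : Plane → Plane := fun x => pt (1 - x 0) (x 1)

/-- Diagonal reflection Γ_{d₁}(x₁,x₂) = (x₂, x₁). -/
def Γd₁ : Plane → Plane := fun x => pt (x 1) (x 0)

/-- Anti-diagonal reflection Γ_{d₂}(x₁,x₂) = (1-x₂, 1-x₁). -/
def Γd₂ : Plane → Plane := fun x => pt (1 - x 1) (1 - x 0)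

/-- Counter-clockwise rotation by π/2 around the center: Γ_{r₁}(x₁,x₂) = (1-x₂, x₁).
    The rotations Γ_{r_j} are `Γr^[j]`, and Γ_{r₄} = `Γr^[4]` = id. -/
def Γr : Plane → Plane := fun x => pt (1 - x 1) (x 0)

/-- The basic contraction ratio a = √(7/24) − 1/2. -/
def aa : ℝ := Real.sqrt (7/24) - 1/2

/-- The maps F_i for 1 ≤ i ≤ 13:
    F_{2j+1}(x) = a·x + (j/24, 0) (0 ≤ j ≤ 5), F_{2j+2}(x) = a²·x + (a + j/24, 0) (0 ≤ j ≤ 5),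
    F_{13}(x) = (1/4)·x + (1/4, 0). -/
def Fbase : ℕ → Plane → Plane := fun i x =>
  if i = 13 then (1/4 : ℝ) • x + pt (1/4) 0
  else if i % 2 = 1 then aa • x + pt ((((i - 1) / 2 : ℕ) : ℝ) / 24) 0
  else aa ^ 2 • x + pt (aa + (((i - 2) / 2 : ℕ) : ℝ) / 24) 0

/-- The maps F_i for 1 ≤ i ≤ 26: F_i = Γ_h ∘ F_{27-i} ∘ Γ_h for 14 ≤ i ≤ 26. -/
def Fq : ℕ → Plane → Plane := fun i =>
  if i ≤ 13 then Fbase i else Γh ∘ Fbase (27 - i) ∘ Γh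

/-- The full iterated function system F_1, …, F_104:
    F_{i+25j} = Γ_{r_j} ∘ F_i ∘ Γ_{r_{4-j}} for 1 ≤ i ≤ 25, 1 ≤ j ≤ 3 (here for
    27 ≤ i ≤ 100 one has j = (i-1)/25 ∈ {1,2,3} and i - 25j ∈ {1,…,25});
    F_{101},…,F_{104} are the four central quarter squares. -/
def Fmap : ℕ → Plane → Plane := fun i =>
  if i ≤ 26 then Fq i
  else if i ≤ 100 then Γr^[(i - 1) / 25] ∘ Fq (i - 25 * ((i - 1) / 25)) ∘ Γr^[4 - (i - 1) / 25]
  else if i = 101 then fun x => (1/4 : ℝ) • x + pt (1/4) (1/4)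
  else if i = 102 then fun x => (1/4 : ℝ) • x + pt (1/2) (1/4)
  else if i = 103 then fun x => (1/4 : ℝ) • x + pt (1/2) (1/2)
  else fun x => (1/4 : ℝ) • x + pt (1/4) (1/2)

/-- The contraction ratio of F_i for 1 ≤ i ≤ 13. -/
def ρbase : ℕ → ℝ := fun i =>
  if i = 13 then 1/4 else if i % 2 = 1 then aa else aa ^ 2

/-- The contraction ratio of F_i for 1 ≤ i ≤ 26. -/
def ρq : ℕ → ℝ := fun i => if i ≤ 13 then ρbase i else ρbase (27 - i)

/-- The contraction ratio ρ_i of F_i for 1 ≤ i ≤ 104. -/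
def rho : ℕ → ℝ := fun i =>
  if i ≤ 26 then ρq i
  else if i ≤ 100 then ρq (i - 25 * ((i - 1) / 25))
  else 1/4

end

/-- The open unit square (0,1)×(0,1). -/
def openUnitSq : Set Plane := {z : Plane | z 0 ∈ Set.Ioo (0:ℝ) 1 ∧ z 1 ∈ Set.Ioo (0:ℝ) 1}

/-!
Every `F_i` is a homothety `x ↦ r x + c` with `r > 0`, so it maps □ onto an axis-parallel
square, and (using `a² = 1/24 - a`) all corners and side lengths of these squares lie in
`ℤ/24 + ℤ a`. Since `1/25 < a < 1/24`, the number `p/24 + q a` is nonnegative as soon as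
`25p + 24q` and `p + q` are, so containment in □ and pairwise separation of the 104 open squares
reduce to finitely many integer inequalities, checked by `decide`. Two closed rectangles with
disjoint interiors meet in a rectangle that is flat in at least one direction: a segment, a point
or nothing.
-/

open Set

@[simp] lemma pt_apply_zero (s t : ℝ) : pt s t 0 = s := rfl

@[simp] lemma pt_apply_one (s t : ℝ) : pt s t 1 = t := rfl

lemma Plane.ext_coords {z w : Plane} (h0 : z 0 = w 0) (h1 : z 1 = w 1) : z = w := by
  ext k; fin_cases k
  exacts [h0, h1]

lemma eq_pt_iff {z : Plane} {s t : ℝ} : z = pt s t ↔ z 0 = s ∧ z 1 = t :=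
  ⟨by rintro rfl; simp, fun ⟨h0, h1⟩ => Plane.ext_coords h0 h1⟩

def box (S T : Set ℝ) : Set Plane := {z | z 0 ∈ S ∧ z 1 ∈ T}

lemma box_inter (S T S' T' : Set ℝ) : box S T ∩ box S' T' = box (S ∩ S') (T ∩ T') := by
  ext z; simp only [box, mem_inter_iff, mem_ofPred_eq]; tauto

lemma box_nonempty {S T : Set ℝ} (hS : S.Nonempty) (hT : T.Nonempty) : (box S T).Nonempty := by
  obtain ⟨s, hs⟩ := hS
  obtain ⟨t, ht⟩ := hT
  exact ⟨pt s t, hs, ht⟩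

lemma box_singleton_left (A : ℝ) (T : Set ℝ) : box {A} T = pt A '' T := by
  ext z
  constructor
  · rintro ⟨rfl, hz⟩
    exact ⟨z 1, hz, (eq_pt_iff.2 ⟨rfl, rfl⟩).symm⟩
  · rintro ⟨t, ht, rfl⟩
    exact ⟨rfl, ht⟩

lemma box_singleton_right (S : Set ℝ) (C : ℝ) : box S {C} = (pt · C) '' S := by
  ext z
  constructor
  · rintro ⟨hz, rfl⟩
    exact ⟨z 0, hz, (eq_pt_iff.2 ⟨rfl, rfl⟩).symm⟩
  · rintro ⟨s, hs, rfl⟩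
    exact ⟨hs, rfl⟩

lemma box_singleton (A C : ℝ) : box {A} {C} = {pt A C} := by
  rw [box_singleton_left, image_singleton]

lemma image_pt_left_segment (A C D : ℝ) :
    pt A '' segment ℝ C D = segment ℝ (pt A C) (pt A D) := by
  have : pt A = AffineMap.lineMap (pt A 0) (pt A 1) := by
    funext t; rw [eq_comm, eq_pt_iff]; simp [AffineMap.lineMap_apply]
  rw [this, image_segment, ← this]

lemma image_pt_right_segment (A B C : ℝ) :
    (pt · C) '' segment ℝ A B = segment ℝ (pt A C) (pt B C) := by
  have : (pt · C) = AffineMap.lineMap (pt 0 C) (pt 1 C) := by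
    funext t; rw [eq_comm, eq_pt_iff]; simp [AffineMap.lineMap_apply]
  rw [this, image_segment, ← this]

def SegmentPointOrEmpty (K : Set Plane) : Prop :=
  (∃ p q : Plane, p ≠ q ∧ K = segment ℝ p q) ∨ (∃ p : Plane, K = {p}) ∨ K = ∅

lemma segmentPointOrEmpty_box_Icc {A B C D : ℝ} (h : ¬ (A < B ∧ C < D)) :
    SegmentPointOrEmpty (box (Icc A B) (Icc C D)) := by
  have empty_of {S T : Set ℝ} (h : S = ∅ ∨ T = ∅) : box S T = ∅ := by
    rcases h with rfl | rfl <;> simp [box]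
  rcases lt_trichotomy A B with hAB | rfl | hAB
  · rcases (not_lt.1 fun hCD => h ⟨hAB, hCD⟩).lt_or_eq with hCD | rfl
    · exact Or.inr <| Or.inr <| empty_of <| Or.inr <| Icc_eq_empty_of_lt hCD
    · refine Or.inl ⟨pt A D, pt B D, fun he => hAB.ne (eq_pt_iff.1 he).1, ?_⟩
      rw [Icc_self, box_singleton_right, ← segment_eq_Icc hAB.le, image_pt_right_segment]
  · rcases lt_trichotomy C D with hCD | rfl | hCD
    · refine Or.inl ⟨pt A C, pt A D, fun he => hCD.ne (eq_pt_iff.1 he).2, ?_⟩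
      rw [Icc_self, box_singleton_left, ← segment_eq_Icc hCD.le, image_pt_left_segment]
    · exact Or.inr <| Or.inl ⟨pt A C, by rw [Icc_self, Icc_self, box_singleton]⟩
    · exact Or.inr <| Or.inr <| empty_of <| Or.inr <| Icc_eq_empty_of_lt hCD
  · exact Or.inr <| Or.inr <| empty_of <| Or.inl <| Icc_eq_empty_of_lt hAB

lemma segmentPointOrEmpty_box_Icc_inter {a b c d a' b' c' d' : ℝ}
    (h : Disjoint (box (Ioo a b) (Ioo c d)) (box (Ioo a' b') (Ioo c' d'))) :
    SegmentPointOrEmpty (box (Icc a b) (Icc c d) ∩ box (Icc a' b') (Icc c' d')) := by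
  rw [box_inter, Icc_inter_Icc, Icc_inter_Icc]
  refine segmentPointOrEmpty_box_Icc fun ⟨hx, hy⟩ => ?_
  have hne := box_nonempty (nonempty_Ioo.2 hx) (nonempty_Ioo.2 hy)
  rw [← Ioo_inter_Ioo, ← Ioo_inter_Ioo, ← box_inter] at hne
  exact not_disjoint_iff_nonempty_inter.2 hne h

def dilate (r u v : ℝ) (x : Plane) : Plane := r • x + pt u v

@[simp] lemma dilate_apply_zero (r u v : ℝ) (x : Plane) : dilate r u v x 0 = r * x 0 + u := rfl

@[simp] lemma dilate_apply_one (r u v : ℝ) (x : Plane) : dilate r u v x 1 = r * x 1 + v := rfl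

lemma image_dilate_box (r u v : ℝ) (S T : Set ℝ) :
    dilate r u v '' box S T = box ((r * · + u) '' S) ((r * · + v) '' T) := by
  ext z
  constructor
  · rintro ⟨x, ⟨hx0, hx1⟩, rfl⟩
    exact ⟨⟨x 0, hx0, rfl⟩, ⟨x 1, hx1, rfl⟩⟩
  · rintro ⟨⟨s, hs, hz0⟩, ⟨t, ht, hz1⟩⟩
    exact ⟨pt s t, ⟨hs, ht⟩, Plane.ext_coords hz0 hz1⟩

lemma Γh_comp_dilate_comp_Γh (r u v : ℝ) : Γh ∘ dilate r u v ∘ Γh = dilate r (1 - r - u) v := by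
  funext x
  refine Plane.ext_coords ?_ (by simp [Γh])
  simp [Γh]
  ring

lemma Γr_comp_dilate (r u v : ℝ) : Γr ∘ dilate r u v = dilate r (1 - r - v) u ∘ Γr := by
  funext x
  refine Plane.ext_coords ?_ (by simp [Γr])
  simp [Γr]
  ring

lemma Γr_iterate_four : Γr^[4] = id := by
  funext x
  refine Plane.ext_coords ?_ ?_ <;> simp [Γr]

lemma aa_sq : aa ^ 2 = 1 / 24 - aa := by
  have hs : Real.sqrt (7 / 24) ^ 2 = 7 / 24 := Real.sq_sqrt (by norm_num)
  unfold aa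
  linear_combination hs

lemma aa_mem_Ioo : aa ∈ Ioo (1 / 25 : ℝ) (1 / 24) := by
  have hs : Real.sqrt (7 / 24) ^ 2 = 7 / 24 := Real.sq_sqrt (by norm_num)
  unfold aa
  constructor <;> nlinarith [Real.sqrt_nonneg (7 / 24)]

noncomputable def valA : ℤ × ℤ →+ ℝ :=
  AddMonoidHom.mk' (fun u => u.1 / 24 + u.2 * aa) fun u v => by
    simp only [Prod.fst_add, Prod.snd_add]; push_cast; ring

lemma valA_apply (u : ℤ × ℤ) : valA u = u.1 / 24 + u.2 * aa := rfl

lemma valA_one : valA (24, 0) = 1 := by norm_num [valA_apply]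

lemma valA_eq_combination (u : ℤ × ℤ) :
    valA u = (25 * u.1 + 24 * u.2 : ℤ) * (1 / 24 - aa) + (u.1 + u.2 : ℤ) * (25 * aa - 1) := by
  rw [valA_apply]; push_cast; ring

def CertNonneg (u : ℤ × ℤ) : Prop := 0 ≤ 25 * u.1 + 24 * u.2 ∧ 0 ≤ u.1 + u.2

instance : DecidablePred CertNonneg := fun _ => inferInstanceAs (Decidable (_ ∧ _))

lemma CertNonneg.valA_nonneg {u : ℤ × ℤ} (h : CertNonneg u) : 0 ≤ valA u := by
  have h₁ : (0 : ℝ) ≤ (25 * u.1 + 24 * u.2 : ℤ) := by exact_mod_cast h.1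
  have h₂ : (0 : ℝ) ≤ (u.1 + u.2 : ℤ) := by exact_mod_cast h.2
  rw [valA_eq_combination]
  exact add_nonneg (mul_nonneg h₁ (by linarith [aa_mem_Ioo.2]))
    (mul_nonneg h₂ (by linarith [aa_mem_Ioo.1]))

lemma CertNonneg.valA_pos {u : ℤ × ℤ} (h : CertNonneg u) (hu : u ≠ 0) : 0 < valA u := by
  obtain ⟨p, q⟩ := u
  obtain ⟨h₁, h₂⟩ := h
  have hpos : 0 < 25 * p + 24 * q ∨ 0 < p + q := by
    by_contra! h'
    obtain ⟨rfl, rfl⟩ : p = 0 ∧ q = 0 := by omega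
    exact hu rfl
  have k₁ : 0 < 1 / 24 - aa := by linarith [aa_mem_Ioo.2]
  have k₂ : 0 < 25 * aa - 1 := by linarith [aa_mem_Ioo.1]
  have g₁ : (0 : ℝ) ≤ (25 * p + 24 * q : ℤ) := by exact_mod_cast h₁
  have g₂ : (0 : ℝ) ≤ (p + q : ℤ) := by exact_mod_cast h₂
  rw [valA_eq_combination]
  rcases hpos with hpos | hpos
  · have : (0 : ℝ) < (25 * p + 24 * q : ℤ) := by exact_mod_cast hpos
    exact add_pos_of_pos_of_nonneg (mul_pos this k₁) (mul_nonneg g₂ k₂.le)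
  · have : (0 : ℝ) < (p + q : ℤ) := by exact_mod_cast hpos
    exact add_pos_of_nonneg_of_pos (mul_nonneg g₁ k₁.le) (mul_pos this k₂)

def CertLe (u v : ℤ × ℤ) : Prop := CertNonneg (v - u)

instance : DecidableRel CertLe := fun _ _ => inferInstanceAs (Decidable (CertNonneg _))

lemma CertLe.valA_le {u v : ℤ × ℤ} (h : CertLe u v) : valA u ≤ valA v :=
  sub_nonneg.1 (map_sub valA v u ▸ CertNonneg.valA_nonneg h)

/-- The square `[x, x + side] × [y, y + side]`, all three numbers encoded as in `valA`. -/
structure Square where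
  x : ℤ × ℤ
  y : ℤ × ℤ
  side : ℤ × ℤ

namespace Square

noncomputable def toMap (s : Square) : Plane → Plane := dilate (valA s.side) (valA s.x) (valA s.y)

def reflect (s : Square) : Square := ⟨(24, 0) - s.side - s.x, s.y, s.side⟩

def rotate (s : Square) : Square := ⟨(24, 0) - s.side - s.y, s.x, s.side⟩

lemma Γh_comp_toMap_comp_Γh (s : Square) : Γh ∘ s.toMap ∘ Γh = s.reflect.toMap := by
  simp only [toMap, reflect, Γh_comp_dilate_comp_Γh, map_sub, valA_one]

lemma Γr_comp_toMap (s : Square) : Γr ∘ s.toMap = s.rotate.toMap ∘ Γr := by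
  simp only [toMap, rotate, Γr_comp_dilate, map_sub, valA_one]

lemma Γr_iterate_comp_toMap_comp {j : ℕ} (hj : j ≤ 4) (s : Square) :
    Γr^[j] ∘ s.toMap ∘ Γr^[4 - j] = (rotate^[j] s).toMap := by
  have hconj : Γr^[j] ∘ s.toMap = (rotate^[j] s).toMap ∘ Γr^[j] := by
    refine Function.semiconj_iff_comp_eq.1
      (Function.Semiconj.iterate_left (g := fun n => (rotate^[n] s).toMap) (fun n => ?_) j 0)
    rw [Function.semiconj_iff_comp_eq, Function.iterate_succ_apply']
    exact Γr_comp_toMap _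
  rw [← Function.comp_assoc, hconj, Function.comp_assoc, ← Function.iterate_add,
    Nat.add_sub_cancel' hj, Γr_iterate_four, Function.comp_id]

def closedBox (s : Square) : Set Plane :=
  box (Icc (valA s.x) (valA (s.x + s.side))) (Icc (valA s.y) (valA (s.y + s.side)))

def openBox (s : Square) : Set Plane :=
  box (Ioo (valA s.x) (valA (s.x + s.side))) (Ioo (valA s.y) (valA (s.y + s.side)))

lemma image_unitSq {s : Square} (hs : 0 < valA s.side) : s.toMap '' unitSq = s.closedBox := by
  change dilate _ _ _ '' box (Icc 0 1) (Icc 0 1) = _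
  rw [image_dilate_box, image_affine_Icc' hs, image_affine_Icc' hs]
  simp only [closedBox, map_add, mul_zero, mul_one, zero_add, add_comm]

lemma image_openUnitSq {s : Square} (hs : 0 < valA s.side) :
    s.toMap '' openUnitSq = s.openBox := by
  change dilate _ _ _ '' box (Ioo 0 1) (Ioo 0 1) = _
  rw [image_dilate_box, image_affine_Ioo hs, image_affine_Ioo hs]
  simp only [openBox, map_add, mul_zero, mul_one, zero_add, add_comm]

def Inside (s : Square) : Prop :=
  CertNonneg s.x ∧ CertNonneg s.y ∧ CertLe (s.x + s.side) (24, 0) ∧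
    CertLe (s.y + s.side) (24, 0) ∧ CertNonneg s.side ∧ s.side ≠ 0

instance : DecidablePred Inside := fun _ => inferInstanceAs (Decidable (_ ∧ _))

lemma Inside.valA_side_pos {s : Square} (h : s.Inside) : 0 < valA s.side :=
  h.2.2.2.2.1.valA_pos h.2.2.2.2.2

lemma Inside.openBox_subset {s : Square} (h : s.Inside) : s.openBox ⊆ openUnitSq := by
  obtain ⟨hx, hy, hx', hy', -⟩ := h
  have hx := hx.valA_nonneg
  have hy := hy.valA_nonneg
  have hx' := hx'.valA_le
  have hy' := hy'.valA_le
  rw [valA_one] at hx' hy'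
  rintro z ⟨⟨h₁, h₂⟩, h₃, h₄⟩
  exact ⟨⟨by linarith, by linarith⟩, by linarith, by linarith⟩

def Separated (s t : Square) : Prop :=
  CertLe (s.x + s.side) t.x ∨ CertLe (t.x + t.side) s.x ∨
    CertLe (s.y + s.side) t.y ∨ CertLe (t.y + t.side) s.y

instance : DecidableRel Separated := fun _ _ => inferInstanceAs (Decidable (_ ∨ _))

lemma Separated.disjoint_openBox {s t : Square} (h : s.Separated t) :
    Disjoint s.openBox t.openBox := by
  rw [Set.disjoint_left]
  rintro z ⟨⟨h₁, h₂⟩, h₃, h₄⟩ ⟨⟨h₅, h₆⟩, h₇, h₈⟩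
  rcases h with h | h | h | h <;> linarith [h.valA_le]

end Square

def squareBase (i : ℕ) : Square :=
  if i = 13 then ⟨(6, 0), 0, (6, 0)⟩
  else if i % 2 = 1 then ⟨(((i - 1) / 2 : ℕ), 0), 0, (0, 1)⟩
  else ⟨(((i - 2) / 2 : ℕ), 1), 0, (1, -1)⟩

def squareQ (i : ℕ) : Square :=
  if i ≤ 13 then squareBase i else (squareBase (27 - i)).reflect

def square (i : ℕ) : Square :=
  if i ≤ 26 then squareQ i
  else if i ≤ 100 then Square.rotate^[(i - 1) / 25] (squareQ (i - 25 * ((i - 1) / 25)))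
  else if i = 101 then ⟨(6, 0), (6, 0), (6, 0)⟩
  else if i = 102 then ⟨(12, 0), (6, 0), (6, 0)⟩
  else if i = 103 then ⟨(12, 0), (12, 0), (6, 0)⟩
  else ⟨(6, 0), (12, 0), (6, 0)⟩

lemma Fbase_eq_toMap (i : ℕ) : Fbase i = (squareBase i).toMap := by
  unfold Fbase squareBase
  split_ifs <;> (change dilate _ _ _ = dilate _ _ _; congr 1) <;>
    simp only [valA_apply, Int.cast_natCast, Int.cast_ofNat, Int.cast_zero, Int.cast_one,
      Int.cast_neg, Prod.fst_zero, Prod.snd_zero, aa_sq] <;> ring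

lemma Fq_eq_toMap (i : ℕ) : Fq i = (squareQ i).toMap := by
  unfold Fq squareQ
  split_ifs
  · exact Fbase_eq_toMap i
  · rw [Fbase_eq_toMap, Square.Γh_comp_toMap_comp_Γh]

lemma Fmap_eq_toMap (i : ℕ) : Fmap i = (square i).toMap := by
  unfold Fmap square
  split_ifs
  · exact Fq_eq_toMap i
  · rw [Fq_eq_toMap, Square.Γr_iterate_comp_toMap_comp (by omega)]
  all_goals (change dilate _ _ _ = dilate _ _ _; congr 1) <;> norm_num [valA_apply]

set_option maxRecDepth 10000 in
lemma square_inside : ∀ i ∈ Finset.Icc 1 104, (square i).Inside := by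
  decide

set_option maxRecDepth 10000 in
lemma square_separated :
    ∀ i ∈ Finset.Icc 1 104, ∀ j ∈ Finset.Icc 1 104, i ≠ j → (square i).Separated (square j) := by
  decide

lemma Fmap_image_openUnitSq {i : ℕ} (hi : i ∈ Finset.Icc 1 104) :
    Fmap i '' openUnitSq = (square i).openBox := by
  rw [Fmap_eq_toMap, Square.image_openUnitSq (square_inside i hi).valA_side_pos]

lemma Fmap_image_unitSq {i : ℕ} (hi : i ∈ Finset.Icc 1 104) :
    Fmap i '' unitSq = (square i).closedBox := by
  rw [Fmap_eq_toMap, Square.image_unitSq (square_inside i hi).valA_side_pos]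

/-- The 104 similarities satisfy the open set condition with the open unit square:
    the images of the open square are pairwise disjoint and contained in the open square;
    equivalently, for i ≠ j the intersection F_i(□) ∩ F_j(□) is a (nondegenerate) line
    segment, a single point, or empty. -/
theorem stmt4 :
    (∀ i ∈ Finset.Icc 1 104, ∀ j ∈ Finset.Icc 1 104, i ≠ j →
      Disjoint (Fmap i '' openUnitSq) (Fmap j '' openUnitSq)) ∧
    (∀ i ∈ Finset.Icc 1 104, Fmap i '' openUnitSq ⊆ openUnitSq) ∧
    (∀ i ∈ Finset.Icc 1 104, ∀ j ∈ Finset.Icc 1 104, i ≠ j →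
      (∃ p q : Plane, p ≠ q ∧ Fmap i '' unitSq ∩ Fmap j '' unitSq = segment ℝ p q) ∨
      (∃ p : Plane, Fmap i '' unitSq ∩ Fmap j '' unitSq = {p}) ∨
      Fmap i '' unitSq ∩ Fmap j '' unitSq = ∅) := by
  refine ⟨fun i hi j hj hij => ?_, fun i hi => ?_, fun i hi j hj hij => ?_⟩
  · rw [Fmap_image_openUnitSq hi, Fmap_image_openUnitSq hj]
    exact (square_separated i hi j hj hij).disjoint_openBox
  · rw [Fmap_image_openUnitSq hi]
    exact (square_inside i hi).openBox_subset
  · rw [Fmap_image_unitSq hi, Fmap_image_unitSq hj]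
    exact segmentPointOrEmpty_box_Icc_inter (square_separated i hi j hj hij).disjoint_openBox
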